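/- arXiv:2602.20086 — 3 statements merged into one kernel-verified Lean document; each statement's English description precedes it below -/
import Mathlib

section
/- Let N ≥ 1 and let h, g range over integers with h, g > N^{2/3}. The number of quadruples (n₁, n₂, n₃, n₄) of positive integers with all nᵢ ≤ N, satisfying n₁n₂ = n₃n₄ and P⁺(n₁) = P⁺(n₂) = P⁺(n₃) = P⁺(n₄) = p for some common prime p > N^{2/3}, is ≪ N^{4/3} log N. -/
/-!
If `n₁, n₂, n₃, n₄ ≤ N` share the largest prime factor `p`, then `nᵢ = p mᵢ` with `mᵢ ≤ N / p`
and `m₁ m₂ = m₃ m₄`. Every solution of `m₁ m₂ = m₃ m₄` is `(ac, db, ad, cb)`; in `[1, M]⁴`, with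
`e = max c d`, there are at most `(M / e)²` choices of `(a, b)` and `2e` of `(c, d)`, so at most
`2 M² ∑_{e ≤ M} 1/e ≪ M² log M` solutions. Summing `N² log N / p²` over `p > N^{2/3}` gives
`≪ N^{4/3} log N`.
-/

/-- The largest prime factor of `n` (0 if `n` has no prime factor). -/
def maxPrimeFac (n : ℕ) : ℕ := n.primeFactors.sup id

open Finset Real

theorem exists_mul_eq_of_mul_eq_mul {α : Type*} [CommMonoidWithZero α] [IsCancelMulZero α]
    [DecompositionMonoid α] {x y z w : α} (hz : z ≠ 0) (h : x * y = z * w) :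
    ∃ a b c d, x = a * c ∧ y = d * b ∧ z = a * d ∧ w = c * b := by
  obtain ⟨a, d, ⟨c, rfl⟩, ⟨b, rfl⟩, rfl⟩ := exists_dvd_and_dvd_of_dvd_mul (Dvd.intro w h.symm)
  exact ⟨a, b, c, d, rfl, rfl, rfl, mul_left_cancel₀ hz (by rw [← h, mul_mul_mul_comm])⟩

def mulQuadruples (M : ℕ) : Finset (ℕ × ℕ × ℕ × ℕ) :=
  {m ∈ Icc 1 M ×ˢ Icc 1 M ×ˢ Icc 1 M ×ˢ Icc 1 M | m.1 * m.2.1 = m.2.2.1 * m.2.2.2}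

def pairsWithMax (e : ℕ) : Finset (ℕ × ℕ) := Icc 1 e ×ˢ {e} ∪ {e} ×ˢ Icc 1 e

lemma card_pairsWithMax_le (e : ℕ) : #(pairsWithMax e) ≤ 2 * e := by
  refine (card_union_le _ _).trans ?_
  simp only [card_product, Nat.card_Icc, card_singleton]
  omega

lemma mem_pairsWithMax_max {c d : ℕ} (hc : 1 ≤ c) (hd : 1 ≤ d) :
    (c, d) ∈ pairsWithMax (max c d) := by
  simp only [pairsWithMax, mem_union, mem_product, mem_Icc, mem_singleton]
  omega

lemma le_div_max_of_mul_le {M a c d : ℕ} (hc : 1 ≤ c) (hac : a * c ≤ M) (had : a * d ≤ M) :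
    a ≤ M / max c d :=
  (Nat.le_div_iff_mul_le (by omega)).2 (by rw [← Nat.mul_max_mul_left]; exact max_le hac had)

lemma mulQuadruples_subset_biUnion (M : ℕ) :
    mulQuadruples M ⊆ (Icc 1 M).biUnion fun e =>
      (Icc 1 (M / e) ×ˢ Icc 1 (M / e) ×ˢ pairsWithMax e).image
        fun t => (t.1 * t.2.2.1, t.2.2.2 * t.2.1, t.1 * t.2.2.2, t.2.2.1 * t.2.1) := by
  rintro ⟨x, y, z, w⟩ hm
  simp only [mulQuadruples, mem_filter, mem_product, mem_Icc] at hm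
  obtain ⟨⟨⟨hx, hxM⟩, ⟨hy, hyM⟩, ⟨hz, hzM⟩, ⟨-, hwM⟩⟩, h⟩ := hm
  obtain ⟨a, b, c, d, rfl, rfl, rfl, rfl⟩ := exists_mul_eq_of_mul_eq_mul (by omega) h
  have ha : 1 ≤ a := Nat.pos_of_mul_pos_right hx
  have hb : 1 ≤ b := Nat.pos_of_mul_pos_left hy
  have hc : 1 ≤ c := Nat.pos_of_mul_pos_left hx
  have hd : 1 ≤ d := Nat.pos_of_mul_pos_left hz
  simp only [mem_biUnion, mem_image, mem_product, mem_Icc]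
  refine ⟨max c d, ⟨le_max_of_le_left hc, max_le ?_ ?_⟩, (a, b, c, d),
    ⟨⟨ha, le_div_max_of_mul_le hc hxM hzM⟩, ⟨hb, ?_⟩, mem_pairsWithMax_max hc hd⟩, rfl⟩
  · exact (Nat.le_mul_of_pos_left c ha).trans hxM
  · exact (Nat.le_mul_of_pos_left d ha).trans hzM
  · rw [mul_comm] at hyM hwM
    exact le_div_max_of_mul_le hc hwM hyM

lemma card_mulQuadruples_le_sum (M : ℕ) :
    #(mulQuadruples M) ≤ ∑ e ∈ Icc 1 M, M / e * (M / e) * (2 * e) := by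
  refine (card_le_card (mulQuadruples_subset_biUnion M)).trans
    (card_biUnion_le.trans (sum_le_sum fun e _ => card_image_le.trans ?_))
  rw [card_product, card_product, Nat.card_Icc, Nat.add_sub_cancel, ← mul_assoc]
  exact Nat.mul_le_mul_left _ (card_pairsWithMax_le e)

theorem card_mulQuadruples_le (M : ℕ) :
    (#(mulQuadruples M) : ℝ) ≤ 2 * M ^ 2 * (1 + log M) :=
  calc (#(mulQuadruples M) : ℝ)
      ≤ ∑ e ∈ Icc 1 M, ((M / e : ℕ) : ℝ) * (M / e : ℕ) * (2 * e) := by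
        exact_mod_cast card_mulQuadruples_le_sum M
    _ ≤ ∑ e ∈ Icc 1 M, 2 * M ^ 2 * (e : ℝ)⁻¹ := by
        refine sum_le_sum fun e he => ?_
        have he : (0 : ℝ) < e := by exact_mod_cast (mem_Icc.1 he).1
        calc _ ≤ (M / e : ℝ) * (M / e) * (2 * e) := by gcongr <;> exact Nat.cast_div_le
          _ = _ := by field_simp
    _ = 2 * M ^ 2 * harmonic M := by
        rw [← mul_sum, harmonic_eq_sum_Icc]; push_cast; rfl
    _ ≤ 2 * M ^ 2 * (1 + log M) := by gcongr; exact harmonic_le_one_add_log M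

lemma maxPrimeFac_dvd {n : ℕ} (h : maxPrimeFac n ≠ 0) : maxPrimeFac n ∣ n := by
  have hne : n.primeFactors.Nonempty :=
    nonempty_iff_ne_empty.2 fun he => h (by simp [maxPrimeFac, he])
  obtain ⟨q, hq, hsup⟩ := exists_mem_eq_sup _ hne id
  rw [maxPrimeFac, hsup]
  exact Nat.dvd_of_mem_primeFactors hq

lemma mem_image_smul_mulQuadruples {N p : ℕ} {q : ℕ × ℕ × ℕ × ℕ} (hp : 0 < p)
    (hdvd : p ∣ q.1 ∧ p ∣ q.2.1 ∧ p ∣ q.2.2.1 ∧ p ∣ q.2.2.2) (hq : q ∈ mulQuadruples N) :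
    q ∈ (mulQuadruples (N / p)).image (p • ·) := by
  obtain ⟨n₁, n₂, n₃, n₄⟩ := q
  obtain ⟨⟨m₁, rfl⟩, ⟨m₂, rfl⟩, ⟨m₃, rfl⟩, ⟨m₄, rfl⟩⟩ := hdvd
  simp only [mulQuadruples, mem_filter, mem_product, mem_Icc] at hq
  obtain ⟨⟨⟨h₁, hN₁⟩, ⟨h₂, hN₂⟩, ⟨h₃, hN₃⟩, ⟨h₄, hN₄⟩⟩, h⟩ := hq
  have hle : ∀ m, p * m ≤ N → m ≤ N / p := fun m hm =>
    (Nat.le_div_iff_mul_le hp).2 (by rwa [mul_comm])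
  refine mem_image.2 ⟨(m₁, m₂, m₃, m₄), ?_, rfl⟩
  simp only [mulQuadruples, mem_filter, mem_product, mem_Icc]
  refine ⟨⟨⟨Nat.pos_of_mul_pos_left h₁, hle _ hN₁⟩, ⟨Nat.pos_of_mul_pos_left h₂, hle _ hN₂⟩,
    ⟨Nat.pos_of_mul_pos_left h₃, hle _ hN₃⟩, ⟨Nat.pos_of_mul_pos_left h₄, hle _ hN₄⟩⟩,
    mul_left_cancel₀ (mul_ne_zero hp.ne' hp.ne') ?_⟩
  linear_combination h

lemma card_mulQuadruples_div_le {N p : ℕ} (hp : 0 < p) (hpN : p ≤ N) :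
    (#(mulQuadruples (N / p)) : ℝ) ≤ 2 * N ^ 2 * (1 + log N) * ((p : ℝ) ^ 2)⁻¹ := by
  have hNp : (0 : ℝ) < (N / p : ℕ) := by exact_mod_cast Nat.div_pos hpN hp
  calc (#(mulQuadruples (N / p)) : ℝ) ≤ 2 * (N / p : ℕ) ^ 2 * (1 + log (N / p : ℕ)) :=
        card_mulQuadruples_le _
    _ ≤ 2 * (N / p : ℝ) ^ 2 * (1 + log N) := by
        gcongr
        · exact Nat.cast_div_le
        · exact_mod_cast Nat.div_le_self N p
    _ = _ := by field_simp

def scaledMulQuadruples (k N : ℕ) : Finset (ℕ × ℕ × ℕ × ℕ) :=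
  (Ioo k (N + 1)).biUnion fun p => (mulQuadruples (N / p)).image (p • ·)

lemma mem_scaledMulQuadruples {k N p : ℕ} {q : ℕ × ℕ × ℕ × ℕ} (hkp : k < p)
    (hdvd : p ∣ q.1 ∧ p ∣ q.2.1 ∧ p ∣ q.2.2.1 ∧ p ∣ q.2.2.2) (hq : q ∈ mulQuadruples N) :
    q ∈ scaledMulQuadruples k N := by
  have hq₁ : 1 ≤ q.1 ∧ q.1 ≤ N := by
    simp only [mulQuadruples, mem_filter, mem_product, mem_Icc] at hq
    exact hq.1.1
  have hpN : p < N + 1 := Nat.lt_succ_of_le ((Nat.le_of_dvd hq₁.1 hdvd.1).trans hq₁.2)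
  exact mem_biUnion.2 ⟨p, mem_Ioo.2 ⟨hkp, hpN⟩,
    mem_image_smul_mulQuadruples (by omega) hdvd hq⟩

theorem card_scaledMulQuadruples_le (k N : ℕ) :
    (#(scaledMulQuadruples k N) : ℝ) ≤ 4 * (1 + log N) * (N ^ 2 / (k + 1)) :=
  calc (#(scaledMulQuadruples k N) : ℝ)
      ≤ ∑ p ∈ Ioo k (N + 1), 2 * N ^ 2 * (1 + log N) * ((p : ℝ) ^ 2)⁻¹ := by
        refine (Nat.cast_le.2 card_biUnion_le).trans ?_
        push_cast
        refine sum_le_sum fun p hp => (Nat.cast_le.2 card_image_le).trans ?_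
        obtain ⟨hkp, hpN⟩ := mem_Ioo.1 hp
        exact card_mulQuadruples_div_le (by omega) (by omega)
    _ ≤ 2 * N ^ 2 * (1 + log N) * (2 / (k + 1)) := by
        rw [← mul_sum]
        gcongr
        exact sum_Ioo_inv_sq_le k _
    _ = 4 * (1 + log N) * (N ^ 2 / (k + 1)) := by ring

/-- The number of quadruples `(n₁, n₂, n₃, n₄)` of positive integers `≤ N` with
`n₁n₂ = n₃n₄` and common largest prime factor `p > N^{2/3}` is `≪ N^{4/3} log N`. -/
theorem stmt_10 :
    ∃ C : ℝ, 0 < C ∧ ∃ N₀ : ℕ, ∀ N : ℕ, N₀ ≤ N →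
      ((Set.ncard {q : ℕ × ℕ × ℕ × ℕ |
          (1 ≤ q.1 ∧ q.1 ≤ N) ∧ (1 ≤ q.2.1 ∧ q.2.1 ≤ N) ∧
          (1 ≤ q.2.2.1 ∧ q.2.2.1 ≤ N) ∧ (1 ≤ q.2.2.2 ∧ q.2.2.2 ≤ N) ∧
          q.1 * q.2.1 = q.2.2.1 * q.2.2.2 ∧
          ∃ p : ℕ, p.Prime ∧ (N : ℝ) ^ ((2 : ℝ) / 3) < (p : ℝ) ∧
            maxPrimeFac q.1 = p ∧ maxPrimeFac q.2.1 = p ∧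
            maxPrimeFac q.2.2.1 = p ∧ maxPrimeFac q.2.2.2 = p} : ℝ))
        ≤ C * (N : ℝ) ^ ((4 : ℝ) / 3) * Real.log N := by
  refine ⟨8, by norm_num, 3, fun N hN => ?_⟩
  have hN3 : (3 : ℝ) ≤ N := by exact_mod_cast hN
  have hx : (0 : ℝ) < (N : ℝ) ^ ((2 : ℝ) / 3) := by positivity
  have hlog : 1 ≤ log N := by
    rw [le_log_iff_exp_le (by positivity)]
    exact exp_one_lt_three.le.trans hN3
  have hNx : (N : ℝ) ^ 2 / (N : ℝ) ^ ((2 : ℝ) / 3) = N ^ ((4 : ℝ) / 3) := by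
    rw [← rpow_natCast, ← rpow_sub (by positivity)]
    norm_num
  calc _ ≤ (#(scaledMulQuadruples ⌊(N : ℝ) ^ ((2 : ℝ) / 3)⌋₊ N) : ℝ) := by
        rw [← Set.ncard_coe_finset]
        refine Nat.cast_le.2 (Set.ncard_le_ncard ?_ (finite_toSet _))
        rintro q ⟨h₁, h₂, h₃, h₄, h, p, hp, hpx, e₁, e₂, e₃, e₄⟩
        have hdvd : ∀ n, maxPrimeFac n = p → p ∣ n := fun n e =>
          e ▸ maxPrimeFac_dvd (e ▸ hp.ne_zero)
        refine mem_scaledMulQuadruples ((Nat.floor_lt hx.le).2 hpx)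
          ⟨hdvd _ e₁, hdvd _ e₂, hdvd _ e₃, hdvd _ e₄⟩ ?_
        simp only [mulQuadruples, mem_filter, mem_product, mem_Icc]
        exact ⟨⟨h₁, h₂, h₃, h₄⟩, h⟩
    _ ≤ 4 * (1 + log N) * N ^ ((4 : ℝ) / 3) := by
        refine (card_scaledMulQuadruples_le _ N).trans ?_
        rw [← hNx]
        gcongr
        exact (Nat.lt_floor_add_one _).le
    _ ≤ 8 * N ^ ((4 : ℝ) / 3) * log N := by
        nlinarith [rpow_nonneg (Nat.cast_nonneg N) ((4 : ℝ) / 3)]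
end

section
/- Let S_N = X₁ + ⋯ + X_N be a sum of random variables and suppose there exist nonnegative reals u₁, …, u_n such that for all 1 ≤ i < j ≤ n, P(|S_j − S_i| ≥ λ) ≤ λ^{-4}(∑_{i<k≤j} u_k)² for every λ > 0. Then P(max_{k≤n} |S_k| ≥ λ) ≪ λ^{-4}(∑_{k≤n} u_k)². -/
/-!
Billingsley's chaining argument. Call `ω` a two-sided exceedance of level `λ` on `(a, b]` if some
`j ∈ [a, b]` has both `|S_j - S_a| ≥ λ` and `|S_b - S_j| ≥ λ`. Split `(a, b]` at a point `m + 1`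
that leaves at most half of the `u`-mass on either side. A two-sided exceedance of level `λ` on
`(a, b]` is then a two-sided exceedance of level `9λ/10` on `(a, m]` or on `(m + 1, b]`, or an
increment of size `λ/10` over one of these halves. Since the squared `u`-mass of each half is at
most `(∑ u)² / 4`, induction on `b - a` bounds two-sided exceedances by `K λ⁻⁴ (∑ u)²` for any `K` with
`2 K (10/9)⁴ / 4 + 2 · 10⁴ / 4 ≤ K`, e.g. `K = 10⁵`.
Finally, `|S_k| ≥ λ` forces either a two-sided exceedance of level `λ/2` on `(0, n]` at `k`,
or `|S_n| ≥ λ/2`.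
-/

open MeasureTheory Finset

section SumIoc

variable {G : Type*} [AddCommGroup G] [LinearOrder G] [IsOrderedAddMonoid G] (f : ℕ → G)
  {a j b : ℕ}

lemma abs_sum_Ioc_left_le (haj : a ≤ j) (hjb : j ≤ b) :
    |∑ k ∈ Ioc a j, f k| ≤ |∑ k ∈ Ioc a b, f k| + |∑ k ∈ Ioc j b, f k| := by
  rw [eq_sub_of_add_eq (sum_Ioc_consecutive f haj hjb)]
  exact abs_sub _ _

lemma abs_sum_Ioc_right_le (haj : a ≤ j) (hjb : j ≤ b) :
    |∑ k ∈ Ioc j b, f k| ≤ |∑ k ∈ Ioc a b, f k| + |∑ k ∈ Ioc a j, f k| := by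
  rw [eq_sub_of_add_eq' (sum_Ioc_consecutive f haj hjb)]
  exact abs_sub _ _

end SumIoc

lemma exists_sum_Ioc_le_half {u : ℕ → ℝ} (hu : ∀ k, 0 ≤ u k) {a b : ℕ} (hab : a < b) :
    ∃ m, a ≤ m ∧ m < b ∧ ∑ k ∈ Ioc a m, u k ≤ (∑ k ∈ Ioc a b, u k) / 2 ∧
      ∑ k ∈ Ioc (m + 1) b, u k ≤ (∑ k ∈ Ioc a b, u k) / 2 := by
  classical
  set U := ∑ k ∈ Ioc a b, u k
  have hU : 0 ≤ U := sum_nonneg fun k _ => hu k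
  have hex : ∃ h, a < h ∧ U / 2 ≤ ∑ k ∈ Ioc a h, u k := ⟨b, hab, by linarith⟩
  obtain ⟨hah, hhalf⟩ := Nat.find_spec hex
  have hhb : Nat.find hex ≤ b := Nat.find_min' hex ⟨hab, by linarith⟩
  obtain ⟨m, hm⟩ := Nat.exists_eq_add_one_of_ne_zero (by omega : Nat.find hex ≠ 0)
  rw [hm] at hah hhalf hhb
  refine ⟨m, by omega, by omega, ?_, ?_⟩
  · rcases (show a ≤ m by omega).eq_or_lt with rfl | ham
    · simpa using div_nonneg hU zero_le_two
    · exact le_of_not_ge fun h => Nat.find_min hex (by omega : m < Nat.find hex) ⟨ham, h⟩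
  · linarith [sum_Ioc_consecutive u (by omega : a ≤ m + 1) hhb]

section MaximalInequality

variable {Ω : Type*} (X : ℕ → Ω → ℝ)

def twoSidedExceedance (a b : ℕ) (lam : ℝ) : Set Ω :=
  {ω | ∃ j, a ≤ j ∧ j ≤ b ∧ lam ≤ |∑ k ∈ Ioc a j, X k ω| ∧ lam ≤ |∑ k ∈ Ioc j b, X k ω|}

variable {X}

lemma twoSidedExceedance_eq_empty_of_le {a b : ℕ} (hba : b ≤ a) {lam : ℝ} (hlam : 0 < lam) :
    twoSidedExceedance X a b lam = ∅ := by
  refine Set.eq_empty_of_forall_notMem fun ω ⟨j, haj, hjb, hlt, _⟩ => ?_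
  obtain rfl : j = a := by omega
  simp only [Ioc_self, sum_empty, abs_zero] at hlt
  linarith

lemma twoSidedExceedance_subset {a m b : ℕ} {lam lam₁ lam₂ : ℝ}
    (hsum : lam₁ + lam₂ ≤ lam) (hlam₂ : 0 ≤ lam₂) :
    twoSidedExceedance X a b lam ⊆
      twoSidedExceedance X a m lam₁ ∪ twoSidedExceedance X (m + 1) b lam₁ ∪
        {ω | lam₂ ≤ |∑ k ∈ Ioc a m, X k ω|} ∪ {ω | lam₂ ≤ |∑ k ∈ Ioc (m + 1) b, X k ω|} := by
  rintro ω ⟨j, haj, hjb, hleft, hright⟩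
  simp only [twoSidedExceedance, Set.mem_union, Set.mem_ofPred_eq]
  rcases le_or_gt j m with hjm | hmj
  · by_cases hmid : lam₁ ≤ |∑ k ∈ Ioc j m, X k ω|
    · exact .inl <| .inl <| .inl ⟨j, haj, hjm, by linarith, hmid⟩
    · have := abs_sum_Ioc_left_le (X · ω) haj hjm
      exact .inl <| .inr <| by linarith
  · by_cases hmid : lam₁ ≤ |∑ k ∈ Ioc (m + 1) j, X k ω|
    · exact .inl <| .inl <| .inr ⟨j, hmj, hjb, hmid, by linarith⟩
    · have := abs_sum_Ioc_right_le (X · ω) hmj hjb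
      exact .inr <| by linarith

variable [MeasurableSpace Ω]

def HasIncrementTailBound (μ : Measure Ω) (X : ℕ → Ω → ℝ) (u : ℕ → ℝ) (n : ℕ) : Prop :=
  ∀ i j, j ≤ n → ∀ lam : ℝ, 0 < lam →
    μ.real {ω | lam ≤ |∑ k ∈ Ioc i j, X k ω|} ≤ (∑ k ∈ Ioc i j, u k) ^ 2 / lam ^ 4

variable {μ : Measure Ω} {u : ℕ → ℝ}

lemma HasIncrementTailBound.of_lt {n : ℕ}
    (h : ∀ i j, i < j → j ≤ n → ∀ lam : ℝ, 0 < lam →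
      μ.real {ω | lam ≤ |∑ k ∈ Ioc i j, X k ω|} ≤ (∑ k ∈ Ioc i j, u k) ^ 2 / lam ^ 4) :
    HasIncrementTailBound μ X u n := by
  intro i j hjn lam hlam
  rcases lt_or_ge i j with hij | hji
  · exact h i j hij hjn lam hlam
  · have hempty : {ω | lam ≤ |∑ k ∈ Ioc i j, X k ω|} = ∅ :=
      Set.eq_empty_of_forall_notMem fun ω hω => by
        simp only [Ioc_eq_empty_of_le hji, sum_empty, abs_zero, Set.mem_ofPred_eq] at hω
        linarith
    rw [hempty, measureReal_empty]
    positivity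

lemma two_sided_recursion_bound {U uL uR lam : ℝ} (hlam : 0 < lam) (huL : 0 ≤ uL) (huR : 0 ≤ uR)
    (hL : uL ≤ U / 2) (hR : uR ≤ U / 2) :
    10 ^ 5 * uL ^ 2 / (9 / 10 * lam) ^ 4 + 10 ^ 5 * uR ^ 2 / (9 / 10 * lam) ^ 4 +
        uL ^ 2 / (lam / 10) ^ 4 + uR ^ 2 / (lam / 10) ^ 4 ≤ 10 ^ 5 * U ^ 2 / lam ^ 4 := by
  have hsq : uL ^ 2 + uR ^ 2 ≤ U ^ 2 / 2 := by nlinarith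
  have hsplit : 10 ^ 5 * uL ^ 2 / (9 / 10 * lam) ^ 4 + 10 ^ 5 * uR ^ 2 / (9 / 10 * lam) ^ 4 +
      uL ^ 2 / (lam / 10) ^ 4 + uR ^ 2 / (lam / 10) ^ 4 =
      (10 ^ 9 / 6561 + 10 ^ 4) * (uL ^ 2 + uR ^ 2) / lam ^ 4 := by
    field_simp
    ring
  rw [hsplit, div_le_div_iff_of_pos_right (by positivity)]
  nlinarith [sq_nonneg U]

variable [IsFiniteMeasure μ]

theorem measureReal_twoSidedExceedance_le (hu : ∀ k, 0 ≤ u k) {n : ℕ}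
    (hX : HasIncrementTailBound μ X u n) {a b : ℕ} (hbn : b ≤ n) {lam : ℝ} (hlam : 0 < lam) :
    μ.real (twoSidedExceedance X a b lam) ≤ 10 ^ 5 * (∑ k ∈ Ioc a b, u k) ^ 2 / lam ^ 4 := by
  rcases le_or_gt b a with hba | hab
  · rw [twoSidedExceedance_eq_empty_of_le hba hlam, measureReal_empty]
    positivity
  obtain ⟨m, ham, hmb, hL, hR⟩ := exists_sum_Ioc_le_half hu hab
  have hcover := twoSidedExceedance_subset (X := X) (a := a) (m := m) (b := b) (lam := lam)
    (lam₁ := 9 / 10 * lam) (lam₂ := lam / 10) (by linarith) (by positivity)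
  have hE₁ := measureReal_twoSidedExceedance_le hu hX (a := a) (b := m) (by omega)
    (lam := 9 / 10 * lam) (by positivity)
  have hE₂ := measureReal_twoSidedExceedance_le hu hX (a := m + 1) (b := b) hbn
    (lam := 9 / 10 * lam) (by positivity)
  have hT₁ := hX a m (by omega) (lam / 10) (by positivity)
  have hT₂ := hX (m + 1) b hbn (lam / 10) (by positivity)
  calc μ.real (twoSidedExceedance X a b lam)
      ≤ μ.real (twoSidedExceedance X a m (9 / 10 * lam)) +
          μ.real (twoSidedExceedance X (m + 1) b (9 / 10 * lam)) +
          μ.real {ω | lam / 10 ≤ |∑ k ∈ Ioc a m, X k ω|} +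
          μ.real {ω | lam / 10 ≤ |∑ k ∈ Ioc (m + 1) b, X k ω|} := by
        refine (measureReal_mono hcover).trans ?_
        grw [measureReal_union_le, measureReal_union_le, measureReal_union_le]
    _ ≤ 10 ^ 5 * (∑ k ∈ Ioc a b, u k) ^ 2 / lam ^ 4 := by
        grw [hE₁, hE₂, hT₁, hT₂]
        exact two_sided_recursion_bound hlam (sum_nonneg fun k _ => hu k)
          (sum_nonneg fun k _ => hu k) hL hR
termination_by b - a

theorem measureReal_exists_abs_sum_ge_le (hu : ∀ k, 0 ≤ u k) {n : ℕ}
    (hX : HasIncrementTailBound μ X u n) {lam : ℝ} (hlam : 0 < lam) :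
    μ.real {ω | ∃ k ≤ n, lam ≤ |∑ m ∈ Ioc 0 k, X m ω|} ≤
      1600016 * (∑ k ∈ Ioc 0 n, u k) ^ 2 / lam ^ 4 := by
  have hcover : {ω | ∃ k ≤ n, lam ≤ |∑ m ∈ Ioc 0 k, X m ω|} ⊆
      twoSidedExceedance X 0 n (lam / 2) ∪ {ω | lam / 2 ≤ |∑ m ∈ Ioc 0 n, X m ω|} := by
    rintro ω ⟨k, hkn, hk⟩
    by_cases htail : lam / 2 ≤ |∑ m ∈ Ioc k n, X m ω|
    · exact .inl ⟨k, k.zero_le, hkn, by linarith, htail⟩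
    · have := abs_sum_Ioc_left_le (X · ω) k.zero_le hkn
      exact .inr <| show lam / 2 ≤ _ by linarith
  have hE := measureReal_twoSidedExceedance_le hu hX le_rfl (a := 0) (half_pos hlam)
  have hT := hX 0 n le_rfl (lam / 2) (half_pos hlam)
  calc μ.real {ω | ∃ k ≤ n, lam ≤ |∑ m ∈ Ioc 0 k, X m ω|}
      ≤ 10 ^ 5 * (∑ k ∈ Ioc 0 n, u k) ^ 2 / (lam / 2) ^ 4 +
          (∑ k ∈ Ioc 0 n, u k) ^ 2 / (lam / 2) ^ 4 :=
        ((measureReal_mono hcover).trans (measureReal_union_le _ _)).trans (add_le_add hE hT)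
    _ = 1600016 * (∑ k ∈ Ioc 0 n, u k) ^ 2 / lam ^ 4 := by
        field_simp
        ring

end MaximalInequality

/-- Billingsley's maximal inequality: if the partial sums `S_j = X_1 + ⋯ + X_j`
satisfy `P(|S_j − S_i| ≥ λ) ≤ λ⁻⁴ (∑_{i<k≤j} u_k)²` for all `i < j ≤ n`, then
`P(max_{k≤n} |S_k| ≥ λ) ≪ λ⁻⁴ (∑_{k≤n} u_k)²`. -/
theorem stmt_13 :
    ∃ C : ℝ, 0 < C ∧
      ∀ (Ω : Type) (_ : MeasurableSpace Ω) (μ : Measure Ω), IsProbabilityMeasure μ →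
      ∀ (n : ℕ) (X : ℕ → Ω → ℝ) (u : ℕ → ℝ),
      (∀ k, 0 ≤ u k) →
      (∀ i j : ℕ, i < j → j ≤ n → ∀ lam : ℝ, 0 < lam →
        (μ {ω | lam ≤ |∑ k ∈ Finset.Ioc i j, X k ω|}).toReal
          ≤ lam ^ (-(4 : ℝ)) * (∑ k ∈ Finset.Ioc i j, u k) ^ 2) →
      ∀ lam : ℝ, 0 < lam →
        (μ {ω | ∃ k : ℕ, 1 ≤ k ∧ k ≤ n ∧ lam ≤ |∑ m ∈ Finset.Icc 1 k, X m ω|}).toReal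
          ≤ C * lam ^ (-(4 : ℝ)) * (∑ k ∈ Finset.Icc 1 n, u k) ^ 2 := by
  refine ⟨1600016, by norm_num, fun Ω _ μ _ n X u hu H lam hlam => ?_⟩
  have rpow_neg_four : ∀ l : ℝ, 0 < l → l ^ (-(4 : ℝ)) = (l ^ 4)⁻¹ := fun l hl => by
    rw [Real.rpow_neg hl.le, Real.rpow_ofNat]
  have hX : HasIncrementTailBound μ X u n := .of_lt fun i j hij hjn l hl => by
    have h := H i j hij hjn l hl
    rwa [rpow_neg_four l hl, inv_mul_eq_div] at h
  have hIcc : ∀ k : ℕ, Icc 1 k = Ioc 0 k := Icc_add_one_left_eq_Ioc 0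
  have hsub : {ω | ∃ k : ℕ, 1 ≤ k ∧ k ≤ n ∧ lam ≤ |∑ m ∈ Icc 1 k, X m ω|} ⊆
      {ω | ∃ k ≤ n, lam ≤ |∑ m ∈ Ioc 0 k, X m ω|} := fun ω ⟨k, _, hkn, hk⟩ =>
    ⟨k, hkn, hIcc k ▸ hk⟩
  calc (μ {ω | ∃ k : ℕ, 1 ≤ k ∧ k ≤ n ∧ lam ≤ |∑ m ∈ Icc 1 k, X m ω|}).toReal
      ≤ 1600016 * (∑ k ∈ Ioc 0 n, u k) ^ 2 / lam ^ 4 :=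
        (measureReal_mono hsub).trans (measureReal_exists_abs_sum_ge_le hu hX hlam)
    _ = 1600016 * lam ^ (-(4 : ℝ)) * (∑ k ∈ Icc 1 n, u k) ^ 2 := by
        rw [hIcc, rpow_neg_four lam hlam]
        ring
end

section
/- Let c > 0 and A > 0 with 0 < c < 1/(c_P + 4A + 2) for a given constant c_P > 0, and set N_l = ⌊exp(l^c)⌋. Then the series ∑_{l≥1} ((N_{l+1} − N_l)/N_{l+1})² (log N_{l+1})^{c_P + 4A} converges. -/
open Real Filter Asymptotics

/-!
Write `a = exp (l ^ c)`, `b = exp ((l + 1) ^ c)` and `N = ⌊b⌋₊`. Since taking floors costs at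
most `1` and `b ≥ 2 (l + 1)` eventually, `(N - ⌊a⌋₊) / N ≲ 1 - a / b + 1 / l ≤ (l + 1) ^ c - l ^ c
+ 1 / l ≲ l ^ (c - 1)`, while `log N ≤ (l + 1) ^ c ≲ l ^ c`. The terms are therefore
`O(l ^ (2c - 2 + c K))` with `K = c_P + 4A`, and the exponent is `< -1` exactly when
`c (K + 2) < 1`.
-/

theorem Nat.abs_floor_sub_floor_div_floor_le {a b : ℝ} (hab : a ≤ b) (hb : 2 ≤ b) :
    |((⌊b⌋₊ : ℝ) - ⌊a⌋₊) / ⌊b⌋₊| ≤ 2 * (1 - a / b) + 2 / b := by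
  have hNb : b / 2 ≤ ⌊b⌋₊ := by linarith [Nat.sub_one_lt_floor b]
  have hNa : a - 1 ≤ ⌊a⌋₊ := (Nat.sub_one_lt_floor a).le
  have hmono : (⌊a⌋₊ : ℝ) ≤ ⌊b⌋₊ := by exact_mod_cast Nat.floor_mono hab
  rw [abs_of_nonneg (div_nonneg (sub_nonneg.mpr hmono) (Nat.cast_nonneg _))]
  calc ((⌊b⌋₊ : ℝ) - ⌊a⌋₊) / ⌊b⌋₊ ≤ (b - a + 1) / ⌊b⌋₊ := by
        gcongr; linarith [Nat.floor_le (by linarith : (0 : ℝ) ≤ b)]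
    _ ≤ (b - a + 1) / (b / 2) := by gcongr
    _ = 2 * (1 - a / b) + 2 / b := by field_simp

theorem Real.one_sub_exp_div_exp_le (s t : ℝ) : 1 - exp s / exp t ≤ t - s := by
  rw [← exp_sub]
  linarith [add_one_le_exp (s - t)]

theorem Real.add_one_rpow_sub_rpow_le {x c : ℝ} (hx : 0 < x) (hc₀ : 0 ≤ c) (hc₁ : c ≤ 1) :
    (x + 1) ^ c - x ^ c ≤ c * x ^ (c - 1) := by
  have bernoulli : (1 + x⁻¹) ^ c ≤ 1 + c * x⁻¹ :=
    rpow_one_add_le_one_add_mul_self (by linarith [inv_pos.mpr hx]) hc₀ hc₁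
  calc (x + 1) ^ c - x ^ c = x ^ c * (1 + x⁻¹) ^ c - x ^ c := by
        rw [← mul_rpow hx.le (by positivity), mul_add, mul_inv_cancel₀ hx.ne', mul_one]
    _ ≤ x ^ c * (1 + c * x⁻¹) - x ^ c := by gcongr
    _ = c * x ^ (c - 1) := by rw [rpow_sub_one hx.ne']; ring

theorem Real.eventually_two_mul_le_exp_rpow {c : ℝ} (hc : 0 < c) :
    ∀ᶠ x : ℝ in atTop, 2 * x ≤ exp (x ^ c) := by
  have hdiv : Tendsto (fun x : ℝ => exp (x ^ c) / x) atTop atTop := by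
    refine ((tendsto_exp_div_rpow_atTop (1 / c)).comp (tendsto_rpow_atTop hc)).congr' ?_
    filter_upwards [eventually_gt_atTop 0] with x hx
    rw [Function.comp_apply, ← rpow_mul hx.le, mul_one_div_cancel hc.ne', rpow_one]
  filter_upwards [hdiv.eventually_ge_atTop 2, eventually_gt_atTop 0] with x h2 hx
  rwa [le_div_iff₀ hx] at h2

theorem isBigO_floor_exp_rpow_ratio {c : ℝ} (hc₀ : 0 < c) (hc₁ : c ≤ 1) :
    (fun l : ℕ => ((⌊exp (((l + 1 : ℕ) : ℝ) ^ c)⌋₊ : ℝ) - ⌊exp ((l : ℝ) ^ c)⌋₊)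
        / ⌊exp (((l + 1 : ℕ) : ℝ) ^ c)⌋₊) =O[atTop] fun l => (l : ℝ) ^ (c - 1) := by
  have hlarge : ∀ᶠ l : ℕ in atTop, 2 * ((l : ℝ) + 1) ≤ exp (((l : ℝ) + 1) ^ c) :=
    (tendsto_atTop_add_const_right _ 1 tendsto_natCast_atTop_atTop).eventually
      (eventually_two_mul_le_exp_rpow hc₀)
  refine IsBigO.of_bound (2 * c + 1) ?_
  filter_upwards [hlarge, eventually_ge_atTop 1] with l hb hl
  have hx : (1 : ℝ) ≤ l := by exact_mod_cast hl
  have hmono : exp ((l : ℝ) ^ c) ≤ exp (((l : ℝ) + 1) ^ c) := by gcongr; linarith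
  have hpow : 0 ≤ (l : ℝ) ^ (c - 1) := by positivity
  have hinv : 2 / exp (((l : ℝ) + 1) ^ c) ≤ (l : ℝ) ^ (c - 1) :=
    calc 2 / exp (((l : ℝ) + 1) ^ c) ≤ 2 / (2 * (l : ℝ)) := by gcongr; linarith
      _ = (l : ℝ) ^ (-1 : ℝ) := by rw [rpow_neg_one]; field_simp
      _ ≤ (l : ℝ) ^ (c - 1) := rpow_le_rpow_of_exponent_le hx (by linarith)
  rw [norm_eq_abs, norm_of_nonneg hpow, Nat.cast_succ]
  calc _ ≤ 2 * (1 - exp ((l : ℝ) ^ c) / exp (((l : ℝ) + 1) ^ c))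
          + 2 / exp (((l : ℝ) + 1) ^ c) :=
        Nat.abs_floor_sub_floor_div_floor_le hmono (by linarith)
    _ ≤ 2 * (((l : ℝ) + 1) ^ c - (l : ℝ) ^ c) + (l : ℝ) ^ (c - 1) := by
        have := one_sub_exp_div_exp_le ((l : ℝ) ^ c) (((l : ℝ) + 1) ^ c)
        linarith
    _ ≤ 2 * (c * (l : ℝ) ^ (c - 1)) + (l : ℝ) ^ (c - 1) := by
        gcongr; exact add_one_rpow_sub_rpow_le (by linarith) hc₀.le hc₁
    _ = (2 * c + 1) * (l : ℝ) ^ (c - 1) := by ring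

theorem isBigO_log_floor_exp_rpow {c : ℝ} (hc : 0 < c) :
    (fun l : ℕ => log (⌊exp (((l + 1 : ℕ) : ℝ) ^ c)⌋₊ : ℝ)) =O[atTop] fun l => (l : ℝ) ^ c := by
  refine IsBigO.of_bound (2 ^ c) ?_
  filter_upwards [eventually_ge_atTop 1] with l hl
  have hx : (1 : ℝ) ≤ l := by exact_mod_cast hl
  have hb : 1 ≤ exp (((l + 1 : ℕ) : ℝ) ^ c) := one_le_exp (by positivity)
  have hN : (1 : ℝ) ≤ ⌊exp (((l + 1 : ℕ) : ℝ) ^ c)⌋₊ := by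
    exact_mod_cast (Nat.one_le_floor_iff _).mpr hb
  rw [norm_of_nonneg (log_nonneg hN), norm_of_nonneg (by positivity), ← mul_rpow zero_le_two
    (by positivity)]
  calc _ ≤ log (exp (((l + 1 : ℕ) : ℝ) ^ c)) :=
        log_le_log (by linarith) (Nat.floor_le (by linarith))
    _ = ((l : ℝ) + 1) ^ c := by rw [log_exp, Nat.cast_succ]
    _ ≤ (2 * (l : ℝ)) ^ c := by gcongr; linarith

/-- For `0 < c < 1/(c_P + 4A + 2)` and `N_l = ⌊exp(l^c)⌋`, the series
`∑_l ((N_{l+1} − N_l)/N_{l+1})² (log N_{l+1})^{c_P + 4A}` converges. -/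
theorem stmt_16 (cP A c : ℝ) (hcP : 0 < cP) (hA : 0 < A) (hc : 0 < c)
    (hcu : c < 1 / (cP + 4 * A + 2)) :
    Summable (fun l : ℕ =>
      (((⌊Real.exp (((l + 1 : ℕ) : ℝ) ^ c)⌋₊ : ℝ) - (⌊Real.exp ((l : ℝ) ^ c)⌋₊ : ℝ))
          / (⌊Real.exp (((l + 1 : ℕ) : ℝ) ^ c)⌋₊ : ℝ)) ^ 2
        * (Real.log (⌊Real.exp (((l + 1 : ℕ) : ℝ) ^ c)⌋₊ : ℝ)) ^ (cP + 4 * A)) := by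
  set K := cP + 4 * A
  have hK : 0 ≤ K := by positivity
  have hcK : c * (K + 2) < 1 := by rwa [lt_div_iff₀ (by positivity)] at hcu
  have hc₁ : c ≤ 1 := by nlinarith
  have hexp : 2 * (c - 1) + c * K < -1 := by linarith
  refine summable_of_isBigO_nat' (Real.summable_nat_rpow.mpr hexp) ?_
  refine (((isBigO_floor_exp_rpow_ratio hc hc₁).pow 2).mul
    ((isBigO_log_floor_exp_rpow hc).rpow hK (Eventually.of_forall fun l => by positivity)))
    |>.trans_eventuallyEq ?_
  filter_upwards [eventually_gt_atTop 0] with l hl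
  have hl : (0 : ℝ) < l := by exact_mod_cast hl
  rw [rpow_add hl, ← rpow_natCast, ← rpow_mul hl.le, ← rpow_mul hl.le]
  ring_nf
end
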